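/- Let C = v₀v₁⋯v_{n−1} be a circuit in a graph G with a Z₂×Z₂-flow g in which every class E_{g=a}(C) is a matching, and suppose g(v₁v₂) = g(v₃v₄) = (0,0), g(v₀v₁) = (1,0), g(v₀v_{n−1}) = (1,1). Let v_t (t ≥ 1) be the other odd-degree vertex in the component of v₀ in the subgraph of G − E(C) induced by edges with value in {(1,0),(0,1)}, and suppose additionally all flows in ℛ_C(g) have all four classes of equal weight on C. Then t ≥ 5. -/
import Mathlib


open Finset

/-- The number of endpoints of the (possibly looped) edge `s` equal to `v`
(a loop at `v` counts twice). -/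
def edgeCount {V : Type} [DecidableEq V] (s : Sym2 V) (v : V) : ℕ :=
  Sym2.lift ⟨fun a b => (if a = v then 1 else 0) + (if b = v then 1 else 0),
    fun a b => by dsimp; omega⟩ s

/-- A `ℤ₂ × ℤ₂`-flow of a multigraph with edge-ends map `ends`:
the values on edges incident with a vertex (loops counted twice) sum to `(0,0)`. -/
def IsFlow {V E : Type} [DecidableEq V] [Fintype E] (ends : E → Sym2 V)
    (f : E → ZMod 2 × ZMod 2) : Prop :=
  ∀ v : V, ∑ e : E, edgeCount (ends e) v • f e = 0

/-- An even subgraph (cycle): every vertex has even degree. -/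
def IsEvenSub {V E : Type} [DecidableEq V] (ends : E → Sym2 V) (S : Finset E) : Prop :=
  ∀ v : V, Even (∑ e ∈ S, edgeCount (ends e) v)

/-- A circuit: a nonempty connected 2-regular subgraph, given by its edge set. -/
def IsCircuit {V E : Type} [DecidableEq V] (ends : E → Sym2 V) (CE : Finset E) : Prop :=
  CE.Nonempty ∧
  (∀ v : V, (∑ e ∈ CE, edgeCount (ends e) v = 0) ∨ (∑ e ∈ CE, edgeCount (ends e) v = 2)) ∧
  ∀ e₁ ∈ CE, ∀ e₂ ∈ CE,
    Relation.ReflTransGen (fun a b => ∃ v : V, v ∈ ends a ∧ v ∈ ends b ∧ a ∈ CE ∧ b ∈ CE) e₁ e₂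

lemma edgeCount_mk {V : Type} [DecidableEq V] (a b v : V) :
    edgeCount s(a, b) v = (if a = v then 1 else 0) + (if b = v then 1 else 0) := rfl

lemma zmod2_add_self : ∀ x : ZMod 2, x + x = 0 := by decide

lemma zmod2_aux1 : ∀ x y z : ZMod 2, x + y + (y + z) = x + z := by decide

lemma zmod2_aux2 : ∀ a b c : ZMod 2, a + b + a + c = b + c := by decide

lemma ite_flip {V : Type} [DecidableEq V] (a b : V) :
    (if a = b then (1 : ZMod 2) else 0) = (if b = a then 1 else 0) := by
  by_cases h : a = b
  · simp [h]
  · simp [h, Ne.symm h]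

lemma sum_toggle {E : Type} [DecidableEq E] (S : Finset E) (e : E) (f : E → ZMod 2) :
    ∑ x ∈ (if e ∈ S then S.erase e else insert e S), f x = ∑ x ∈ S, f x + f e := by
  by_cases h : e ∈ S
  · rw [if_pos h]
    have h2 := Finset.sum_erase_add S f h
    rw [← h2, add_assoc, zmod2_add_self, add_zero]
  · rw [if_neg h, Finset.sum_insert h, add_comm]

lemma exists_parity_set {V E : Type} [DecidableEq V] [DecidableEq E]
    (ends : E → Sym2 V) (P : Finset E) (v0 u : V)
    (h : Relation.ReflTransGen (fun u w => ∃ e ∈ P, u ∈ ends e ∧ w ∈ ends e) v0 u) :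
    ∃ S : Finset E, S ⊆ P ∧ ∀ w : V,
      (∑ e ∈ S, (edgeCount (ends e) w : ZMod 2)) =
        (if w = v0 then 1 else 0) + (if w = u then 1 else 0) := by
  induction h with
  | refl =>
    refine ⟨∅, Finset.empty_subset _, fun w => ?_⟩
    rw [Finset.sum_empty, zmod2_add_self]
  | @tail b c hab hbc ih =>
    obtain ⟨S, hSP, hpar⟩ := ih
    obtain ⟨e, heP, hbe, hce⟩ := hbc
    by_cases hbc' : b = c
    · exact ⟨S, hSP, by simpa [hbc'] using hpar⟩
    · have hend : ends e = s(b, c) := (Sym2.mem_and_mem_iff hbc').mp ⟨hbe, hce⟩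
      refine ⟨if e ∈ S then S.erase e else insert e S, ?_, fun w => ?_⟩
      · split
        · exact (Finset.erase_subset _ _).trans hSP
        · exact Finset.insert_subset heP hSP
      · rw [sum_toggle, hpar w, hend, edgeCount_mk]
        push_cast
        rw [ite_flip b w, ite_flip c w, zmod2_aux1]

lemma telescope2 (t : ℕ) (F : ℕ → ZMod 2) :
    ∑ i ∈ Finset.range t, (F i + F (i + 1)) = F 0 + F t := by
  induction t with
  | zero => rw [Finset.sum_range_zero, zmod2_add_self]
  | succ t ih =>
    rw [Finset.sum_range_succ, ih, ← add_assoc, add_comm (F 0) (F t), zmod2_aux2]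


/-- Lemma 3.7, first assertion: in a circuit `C = v₀v₁⋯v_{n−1}`
with `g(v₁v₂) = g(v₃v₄) = (0,0)`, `g(v₀v₁) = (1,0)`, `g(v₀v_{n−1}) = (1,1)`,
with every class a matching and all flows in `ℛ_C(g)` having four classes of
equal weight on `C`, the odd-degree partner `v_t` of `v₀` in `P_{(1,0),(0,1)}`
satisfies `t ≥ 5`. -/
theorem odd_partner_ge_five {V E : Type} [Fintype V] [Fintype E] [DecidableEq V] [DecidableEq E]
    (n : ℕ) [NeZero n] (hn : 5 ≤ n)
    (ends : E → Sym2 V)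
    (v : ZMod n → V) (hv : Function.Injective v)
    (ce : ZMod n → E) (hce : Function.Injective ce)
    (hends : ∀ i : ZMod n, ends (ce i) = s(v i, v (i + 1)))
    (CE : Finset E) (hCE : CE = Finset.univ.image ce) (hC : IsCircuit ends CE)
    (ω : E → ℕ) (hω : ∀ e, 0 < ω e)
    (g : E → ZMod 2 × ZMod 2) (hg : IsFlow ends g)
    -- every class `E_{g'=a}(C)` of every flow in `ℛ_C(g)` is a matching
    (hmatch : ∀ g' : E → ZMod 2 × ZMod 2, IsFlow ends g' →
      (∀ e, e ∉ CE → (g' e ≠ 0 ↔ g e ≠ 0)) →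
      ∀ a : ZMod 2 × ZMod 2, ∀ e₁ ∈ CE, ∀ e₂ ∈ CE,
        g' e₁ = a → g' e₂ = a → e₁ ≠ e₂ →
        ∀ u : V, ¬ (u ∈ ends e₁ ∧ u ∈ ends e₂))
    -- all flows in `ℛ_C(g)` have all four classes of equal weight on `C`
    (hbal : ∀ g' : E → ZMod 2 × ZMod 2, IsFlow ends g' →
      (∀ e, e ∉ CE → (g' e ≠ 0 ↔ g e ≠ 0)) →
      ∀ a a' : ZMod 2 × ZMod 2,
        ∑ e ∈ CE.filter (fun e => g' e = a), ω e =
        ∑ e ∈ CE.filter (fun e => g' e = a'), ω e)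
    (h01 : g (ce 1) = 0) (h03 : g (ce 3) = 0)
    (h00 : g (ce 0) = (1, 0)) (hlast : g (ce (-1)) = (1, 1))
    -- `v_t` is the other odd-degree vertex in the component of `v₀` in `P_{(1,0),(0,1)}`
    (P : Finset E)
    (hP : P = Finset.univ.filter fun e => e ∉ CE ∧ (g e = (1, 0) ∨ g e = (0, 1)))
    (t : ℕ) (ht1 : 1 ≤ t) (htn : t < n)
    (hvt : v (t : ZMod n) ≠ v 0)
    (hodd0 : Odd (∑ e ∈ P, edgeCount (ends e) (v 0)))
    (hoddt : Odd (∑ e ∈ P, edgeCount (ends e) (v (t : ZMod n))))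
    (hconn : Relation.ReflTransGen (fun u w => ∃ e ∈ P, u ∈ ends e ∧ w ∈ ends e)
      (v 0) (v (t : ZMod n))) :
    5 ≤ t := by
  by_contra hlt
  push_neg at hlt
  obtain ⟨S, hSP, hSpar⟩ := exists_parity_set ends P (v 0) (v (t : ZMod n)) hconn
  set seg : Finset E := (Finset.range t).image (fun i : ℕ => ce (i : ZMod n)) with hseg
  have hPnotCE : ∀ e ∈ P, e ∉ CE := by
    intro e he
    rw [hP] at he
    exact (Finset.mem_filter.mp he).2.1
  have hsegCE : ∀ e ∈ seg, e ∈ CE := by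
    intro e he
    obtain ⟨i, _, rfl⟩ := Finset.mem_image.mp he
    rw [hCE]
    exact Finset.mem_image_of_mem _ (Finset.mem_univ _)
  have hdisj : Disjoint S seg := by
    rw [Finset.disjoint_left]
    intro e heS heseg
    exact hPnotCE e (hSP heS) (hsegCE e heseg)
  have hmemseg : ∀ i : ℕ, i < t → ce (i : ZMod n) ∈ seg := by
    intro i hi
    exact Finset.mem_image_of_mem _ (Finset.mem_range.mpr hi)
  have hsegmem : ∀ e ∈ seg, ∃ i : ℕ, i < t ∧ e = ce (i : ZMod n) := by
    intro e he
    obtain ⟨i, hi, rfl⟩ := Finset.mem_image.mp he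
    exact ⟨i, Finset.mem_range.mp hi, rfl⟩
  have hsegpar : ∀ w : V, (∑ e ∈ seg, (edgeCount (ends e) w : ZMod 2)) =
      (if w = v 0 then 1 else 0) + (if w = v (t : ZMod n) then 1 else 0) := by
    intro w
    have hinj : ∀ x ∈ Finset.range t, ∀ y ∈ Finset.range t,
        ce (x : ZMod n) = ce (y : ZMod n) → x = y := by
      intro x hx y hy hxy
      have hx' := Finset.mem_range.mp hx
      have hy' := Finset.mem_range.mp hy
      have h2 := congrArg ZMod.val (hce hxy)
      rwa [ZMod.val_natCast_of_lt (by omega), ZMod.val_natCast_of_lt (by omega)] at h2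
    rw [hseg, Finset.sum_image hinj]
    have hterm : ∀ i ∈ Finset.range t, ((edgeCount (ends (ce (i : ZMod n))) w : ZMod 2))
        = (if w = v (i : ZMod n) then 1 else 0)
          + (if w = v (((i + 1 : ℕ)) : ZMod n) then 1 else 0) := by
      intro i _
      rw [hends, edgeCount_mk]
      push_cast
      rw [ite_flip (v (i : ZMod n)) w, ite_flip (v ((i : ZMod n) + 1)) w]
    rw [Finset.sum_congr rfl hterm,
      telescope2 t (fun j => if w = v ((j : ℕ) : ZMod n) then 1 else 0)]
    norm_num
  set D : Finset E := S ∪ seg with hD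
  have hD2 : ∀ w : V, ((∑ e ∈ D, edgeCount (ends e) w : ℕ) : ZMod 2) = 0 := by
    intro w
    rw [hD]
    push_cast [Finset.sum_union hdisj]
    rw [hSpar w, hsegpar w, zmod2_add_self]
  set g' : E → ZMod 2 × ZMod 2 :=
    fun e => g e + (if e ∈ D then ((1 : ZMod 2), (1 : ZMod 2)) else 0) with hg'
  have hflow' : IsFlow ends g' := by
    intro w
    have hsum : ∑ e : E, edgeCount (ends e) w • g' e
        = ∑ e : E, edgeCount (ends e) w • g e
          + ∑ e : E, (if e ∈ D then
              ((edgeCount (ends e) w : ZMod 2 × ZMod 2) * ((1 : ZMod 2), (1 : ZMod 2)))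
            else 0) := by
      rw [← Finset.sum_add_distrib]
      refine Finset.sum_congr rfl fun e _ => ?_
      rw [hg', smul_add]
      congr 1
      split
      · rw [nsmul_eq_mul]
      · rw [smul_zero]
    rw [hsum, hg w, zero_add, Finset.sum_ite_mem, Finset.univ_inter, ← Finset.sum_mul]
    have hc : (∑ e ∈ D, (edgeCount (ends e) w : ZMod 2 × ZMod 2)) = 0 := by
      rw [← Nat.cast_sum]
      refine Prod.ext ?_ ?_
      · rw [Prod.fst_natCast, hD2 w, Prod.fst_zero]
      · rw [Prod.snd_natCast, hD2 w, Prod.snd_zero]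
    rw [hc, zero_mul]
  have hsupp : ∀ e, e ∉ CE → (g' e ≠ 0 ↔ g e ≠ 0) := by
    intro e heCE
    by_cases heD : e ∈ D
    · have heS : e ∈ S := by
        rcases Finset.mem_union.mp heD with h | h
        · exact h
        · exact absurd (hsegCE e h) heCE
      have heP := hSP heS
      rw [hP, Finset.mem_filter] at heP
      have hval := heP.2.2
      have hrw : g' e = g e + (1, 1) := by simp [hg', heD]
      rw [hrw]
      rcases hval with h | h <;> rw [h] <;> decide
    · have hrw : g' e = g e := by simp [hg', heD]
      rw [hrw]
  set sw : ZMod 2 × ZMod 2 → ℕ := (fun a => ∑ e ∈ seg.filter (fun e => g e = a), ω e)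
    with hsw
  have hkey : ∀ a : ZMod 2 × ZMod 2,
      (∑ e ∈ CE.filter (fun e => g' e = a), ω e) + sw a
        = (∑ e ∈ CE.filter (fun e => g e = a), ω e) + sw (a + (1, 1)) := by
    intro a
    have hseg_sub : seg ⊆ CE := fun e he => hsegCE e he
    have hsplit : CE = (CE \ seg) ∪ seg := (Finset.sdiff_union_of_subset hseg_sub).symm
    have hdisj2 : Disjoint (CE \ seg) seg := Finset.sdiff_disjoint
    have hA : ∀ e ∈ CE \ seg, g' e = g e := by
      intro e he
      have heD : e ∉ D := by
        rw [hD, Finset.mem_union]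
        rintro (h | h)
        · exact hPnotCE e (hSP h) (Finset.mem_sdiff.mp he).1
        · exact (Finset.mem_sdiff.mp he).2 h
      simp [hg', heD]
    have hB : ∀ e ∈ seg, g' e = g e + (1, 1) := by
      intro e he
      have heD : e ∈ D := Finset.mem_union_right _ he
      simp [hg', heD]
    have h11 : ((1 : ZMod 2), (1 : ZMod 2)) + (1, 1) = 0 := by decide
    have h1 : ∑ e ∈ CE.filter (fun e => g' e = a), ω e
        = (∑ e ∈ (CE \ seg).filter (fun e => g e = a), ω e)
          + ∑ e ∈ seg.filter (fun e => g e = a + (1, 1)), ω e := by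
      conv_lhs => rw [hsplit]
      rw [Finset.filter_union, Finset.sum_union (Finset.disjoint_filter_filter hdisj2)]
      congr 1
      · refine Finset.sum_congr (Finset.filter_congr fun e he => ?_) fun _ _ => rfl
        rw [hA e he]
      · refine Finset.sum_congr (Finset.filter_congr fun e he => ?_) fun _ _ => rfl
        rw [hB e he]
        constructor
        · intro h; rw [← h, add_assoc, h11, add_zero]
        · intro h; rw [h, add_assoc, h11, add_zero]
    have h2 : ∑ e ∈ CE.filter (fun e => g e = a), ω e
        = (∑ e ∈ (CE \ seg).filter (fun e => g e = a), ω e)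
          + ∑ e ∈ seg.filter (fun e => g e = a), ω e := by
      conv_lhs => rw [hsplit]
      rw [Finset.filter_union, Finset.sum_union (Finset.disjoint_filter_filter hdisj2)]
    rw [h1, h2, hsw]
    ring
  have hW1 := hbal g hg (fun e _ => Iff.rfl) (1, 0) (0, 1)
  have hW2 := hbal g hg (fun e _ => Iff.rfl) 0 (1, 1)
  have hW1' := hbal g' hflow' hsupp (1, 0) (0, 1)
  have hW2' := hbal g' hflow' hsupp 0 (1, 1)
  have e10 := hkey (1, 0)
  have e01 := hkey (0, 1)
  have e00 := hkey 0
  have e11 := hkey (1, 1)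
  rw [show ((1 : ZMod 2), (0 : ZMod 2)) + (1, 1) = (0, 1) from by decide] at e10
  rw [show ((0 : ZMod 2), (1 : ZMod 2)) + (1, 1) = (1, 0) from by decide] at e01
  rw [show (0 : ZMod 2 × ZMod 2) + (1, 1) = (1, 1) from by decide] at e00
  rw [show ((1 : ZMod 2), (1 : ZMod 2)) + (1, 1) = 0 from by decide] at e11
  have hpq : sw (1, 0) = sw (0, 1) := by omega
  have hru : sw 0 = sw (1, 1) := by omega
  have hple : ∀ (a : ZMod 2 × ZMod 2) (e : E), e ∈ seg → g e = a → ω e ≤ sw a := by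
    intro a e he hge
    exact Finset.single_le_sum (fun i _ => Nat.zero_le _)
      (Finset.mem_filter.mpr ⟨he, hge⟩)
  by_cases hc : g (ce 2) = (0, 1) ∧ 3 ≤ t
  · -- sw (1,1) = 0, sw 0 ≥ ω (ce 1)
    obtain ⟨hc2, ht3⟩ := hc
    have h1seg : ce (1 : ZMod n) ∈ seg := by
      have := hmemseg 1 (by omega)
      simpa using this
    have h0le : ω (ce 1) ≤ sw 0 := hple 0 _ h1seg h01
    have h11z : sw (1, 1) = 0 := by
      rw [hsw]
      simp only
      rw [Finset.sum_eq_zero]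
      intro e he
      exfalso
      obtain ⟨i, hit, rfl⟩ := hsegmem e (Finset.mem_filter.mp he).1
      have hgi := (Finset.mem_filter.mp he).2
      have hi3 : i ≤ 3 := by omega
      interval_cases i <;> push_cast at hgi <;>
        first
          | (rw [h00] at hgi; exact absurd hgi (by decide))
          | (rw [h01] at hgi; exact absurd hgi (by decide))
          | (rw [hc2] at hgi; exact absurd hgi (by decide))
          | (rw [h03] at hgi; exact absurd hgi (by decide))
    have := hω (ce 1)
    omega
  · -- sw (0,1) = 0, sw (1,0) ≥ ω (ce 0)
    have h0seg : ce (0 : ZMod n) ∈ seg := by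
      have := hmemseg 0 (by omega)
      simpa using this
    have h0le : ω (ce 0) ≤ sw (1, 0) := hple (1, 0) _ h0seg h00
    have h01z : sw (0, 1) = 0 := by
      rw [hsw]
      simp only
      rw [Finset.sum_eq_zero]
      intro e he
      exfalso
      obtain ⟨i, hit, rfl⟩ := hsegmem e (Finset.mem_filter.mp he).1
      have hgi := (Finset.mem_filter.mp he).2
      have hi3 : i ≤ 3 := by omega
      interval_cases i <;> push_cast at hgi <;>
        first
          | (rw [h00] at hgi; exact absurd hgi (by decide))
          | (rw [h01] at hgi; exact absurd hgi (by decide))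
          | (exact hc ⟨hgi, by omega⟩)
          | (rw [h03] at hgi; exact absurd hgi (by decide))
    have := hω (ce 0)
    omega
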